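/- arXiv:math/0403538 — 8 statements merged into one kernel-verified Lean document; each statement's English description precedes it below -/
import Mathlib

section
/- Let L ≥ 2 be an integer and let a and a+h lie in [0,1]. Then 0 ≤ (a+h)^L - a^L - L*a^(L-1)*h ≤ h^L + (2^L - L - 2) * a * h^2. -/
/-- For `L ≥ 2` and `a`, `a+h` in `[0,1]`,
`0 ≤ (a+h)^L - a^L - L a^{L-1} h ≤ h^L + (2^L - L - 2) a h²`. -/
theorem binomial_remainder_bounds (L : ℕ) (hL : 2 ≤ L) (a h : ℝ)
    (ha : a ∈ Set.Icc (0 : ℝ) 1) (hah : a + h ∈ Set.Icc (0 : ℝ) 1) :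
    0 ≤ (a + h) ^ L - a ^ L - (L : ℝ) * a ^ (L - 1) * h ∧
      (a + h) ^ L - a ^ L - (L : ℝ) * a ^ (L - 1) * h ≤
        h ^ L + ((2 : ℝ) ^ L - L - 2) * a * h ^ 2 := by
  obtain ⟨ha0, ha1⟩ := ha
  obtain ⟨hah0, hah1⟩ := hah
  have habs : |h| ≤ 1 := by
    rw [abs_le]; constructor <;> nlinarith
  obtain ⟨M, hM⟩ : ∃ M, L = M + 2 := ⟨L - 2, by omega⟩
  subst hM
  constructor
  · -- lower bound
    have key : (a + h) ^ (M + 2) - a ^ (M + 2) =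
        (∑ i ∈ Finset.range (M + 2), (a + h) ^ i * a ^ (M + 2 - 1 - i)) * h := by
      have := geom_sum₂_mul (a + h) a (M + 2)
      simpa using this.symm
    have hconst : ((M + 2 : ℕ) : ℝ) * a ^ (M + 2 - 1) * h =
        (∑ _i ∈ Finset.range (M + 2), a ^ (M + 1)) * h := by
      rw [Finset.sum_const, Finset.card_range]
      push_cast
      ring_nf
    rw [key, hconst, ← sub_mul]
    rw [← Finset.sum_sub_distrib]
    rcases le_or_gt 0 h with hh | hh
    · apply mul_nonneg _ hh
      apply Finset.sum_nonneg
      intro i hi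
      rw [Finset.mem_range] at hi
      have h1 : a ^ (M + 1) = a ^ i * a ^ (M + 2 - 1 - i) := by
        rw [← pow_add]; congr 1; omega
      rw [h1, ← sub_mul]
      apply mul_nonneg _ (pow_nonneg ha0 _)
      have : a ^ i ≤ (a + h) ^ i := pow_le_pow_left₀ ha0 (by linarith) i
      linarith
    · have hs : (∑ i ∈ Finset.range (M + 2), ((a + h) ^ i * a ^ (M + 2 - 1 - i) - a ^ (M + 1))) ≤ 0 := by
        apply Finset.sum_nonpos
        intro i hi
        rw [Finset.mem_range] at hi
        have h1 : a ^ (M + 1) = a ^ i * a ^ (M + 2 - 1 - i) := by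
          rw [← pow_add]; congr 1; omega
        rw [h1, ← sub_mul]
        apply mul_nonpos_of_nonpos_of_nonneg _ (pow_nonneg ha0 _)
        have : (a + h) ^ i ≤ a ^ i := pow_le_pow_left₀ hah0 (by linarith) i
        linarith
      nlinarith [hs]
  · -- upper bound
    set t : ℕ → ℝ := fun k => a ^ k * h ^ (M + 2 - k) * ((M + 2).choose k : ℝ) with ht
    have hexp : (a + h) ^ (M + 2) = ∑ k ∈ Finset.range (M + 3), t k := by
      have := add_pow a h (M + 2)
      push_cast at this ⊢
      simpa [ht] using this
    have hsplit : ∑ k ∈ Finset.range (M + 3), t k =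
        (∑ k ∈ Finset.range (M + 1), t k) + t (M + 1) + t (M + 2) := by
      rw [Finset.sum_range_succ, Finset.sum_range_succ]
    have hlast : t (M + 2) = a ^ (M + 2) := by
      simp [ht]
    have hsnd : t (M + 1) = ((M + 2 : ℕ) : ℝ) * a ^ (M + 2 - 1) * h := by
      simp only [ht]
      rw [Nat.choose_succ_self_right]
      have e1 : M + 2 - (M + 1) = 1 := by omega
      have e2 : M + 2 - 1 = M + 1 := by omega
      rw [e1, e2]
      push_cast
      ring
    have hB : (a + h) ^ (M + 2) - a ^ (M + 2) - ((M + 2 : ℕ) : ℝ) * a ^ (M + 2 - 1) * h =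
        ∑ k ∈ Finset.range (M + 1), t k := by
      rw [hexp, hsplit, hlast, hsnd]; ring
    have hpeel : ∑ k ∈ Finset.range (M + 1), t k =
        (∑ i ∈ Finset.range M, t (i + 1)) + t 0 := by
      rw [Finset.sum_range_succ']
    have ht0 : t 0 = h ^ (M + 2) := by simp [ht]
    -- bound each middle term
    have hterm : ∀ i ∈ Finset.range M, t (i + 1) ≤ ((M + 2).choose (i + 1) : ℝ) * (a * h ^ 2) := by
      intro i hi
      rw [Finset.mem_range] at hi
      have hh2 : h ^ (M + 2 - (i + 1)) ≤ h ^ 2 := by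
        calc h ^ (M + 2 - (i + 1)) ≤ |h ^ (M + 2 - (i + 1))| := le_abs_self _
          _ = |h| ^ (M + 2 - (i + 1)) := by rw [abs_pow]
          _ ≤ |h| ^ 2 := pow_le_pow_of_le_one (abs_nonneg h) habs (by omega)
          _ = h ^ 2 := by rw [sq_abs]
      have hap : a ^ (i + 1) ≤ a := pow_le_of_le_one ha0 ha1 (by omega)
      have h1 : a ^ (i + 1) * h ^ (M + 2 - (i + 1)) ≤ a ^ (i + 1) * h ^ 2 :=
        mul_le_mul_of_nonneg_left hh2 (pow_nonneg ha0 _)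
      have h2 : a ^ (i + 1) * h ^ 2 ≤ a * h ^ 2 :=
        mul_le_mul_of_nonneg_right hap (sq_nonneg h)
      have : a ^ (i + 1) * h ^ (M + 2 - (i + 1)) ≤ a * h ^ 2 := le_trans h1 h2
      calc t (i + 1) = a ^ (i + 1) * h ^ (M + 2 - (i + 1)) * ((M + 2).choose (i + 1) : ℝ) := rfl
        _ ≤ (a * h ^ 2) * ((M + 2).choose (i + 1) : ℝ) :=
            mul_le_mul_of_nonneg_right this (Nat.cast_nonneg _)
        _ = ((M + 2).choose (i + 1) : ℝ) * (a * h ^ 2) := by ring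
    have hsum : ∑ i ∈ Finset.range M, t (i + 1) ≤
        (∑ i ∈ Finset.range M, ((M + 2).choose (i + 1) : ℝ)) * (a * h ^ 2) := by
      rw [Finset.sum_mul]
      exact Finset.sum_le_sum hterm
    -- the coefficient sum
    have hcoef : (∑ i ∈ Finset.range M, ((M + 2).choose (i + 1) : ℝ)) =
        (2 : ℝ) ^ (M + 2) - (M + 2) - 2 := by
      have htot : ∑ k ∈ Finset.range (M + 3), ((M + 2).choose k : ℝ) = (2 : ℝ) ^ (M + 2) := by
        have := Nat.sum_range_choose (M + 2)
        exact_mod_cast congrArg (Nat.cast : ℕ → ℝ) this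
      have h1 : ∑ k ∈ Finset.range (M + 3), ((M + 2).choose k : ℝ) =
          (∑ k ∈ Finset.range (M + 1), ((M + 2).choose k : ℝ))
            + ((M + 2).choose (M + 1) : ℝ) + ((M + 2).choose (M + 2) : ℝ) := by
        rw [Finset.sum_range_succ, Finset.sum_range_succ]
      have h2 : ∑ k ∈ Finset.range (M + 1), ((M + 2).choose k : ℝ) =
          (∑ i ∈ Finset.range M, ((M + 2).choose (i + 1) : ℝ)) + ((M + 2).choose 0 : ℝ) := by
        rw [Finset.sum_range_succ']
      have h3 : (M + 2).choose (M + 1) = M + 2 := Nat.choose_succ_self_right (M + 1)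
      rw [h1, h2, h3] at htot
      simp only [Nat.choose_self, Nat.choose_zero_right, Nat.cast_one] at htot
      push_cast at htot ⊢
      linarith
    rw [hB, hpeel, ht0]
    have : (∑ i ∈ Finset.range M, t (i + 1)) ≤
        ((2 : ℝ) ^ (M + 2) - (M + 2) - 2) * (a * h ^ 2) := by
      rw [← hcoef]; exact hsum
    push_cast
    push_cast at this
    nlinarith [this]
end

section
/- For integers N ≥ L ≥ 1 and real a, (Na)_L / (N)_L - a^L = \sum_{j=1}^{L-1} (a-1)^j a^{L-j} \sum_{1 ≤ i_1 < ... < i_j ≤ L-1} (i_1 ... i_j) / ((N - i_1)...(N - i_j)), where (x)_k = x(x-1)...(x-k+1) denotes the falling factorial. -/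
/-- The falling factorial `x(x-1)⋯(x-k+1)` of a real number. -/
def fallingFactorial (x : ℝ) (k : ℕ) : ℝ := ∏ i ∈ Finset.range k, (x - i)

/-!
Each factor of the ratio is `(N a - i) / (N - i) = a + (a - 1) · i / (N - i)`, and the factor
with `i = 0` is just `a`. Expanding the product of the remaining `L - 1` binomials gives, in
degree `j` in `a - 1`, the `j`-th elementary symmetric function of the `i / (N - i)`; the
degree-zero term is `a ^ L`.
-/

open Finset

theorem Finset.prod_add_mul_eq_sum_powersetCard {ι R : Type*} [CommSemiring R]
    (s : Finset ι) (a b : R) (f : ι → R) :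
    ∏ i ∈ s, (a + b * f i) =
      ∑ j ∈ range (#s + 1), b ^ j * a ^ (#s - j) * ∑ t ∈ powersetCard j s, ∏ i ∈ t, f i := by
  classical
  simp_rw [add_comm a, prod_add, sum_powerset, mul_sum]
  refine sum_congr rfl fun j _ => sum_congr rfl fun t ht => ?_
  obtain ⟨hts, rfl⟩ := mem_powersetCard.mp ht
  rw [prod_mul_distrib, prod_const, prod_const, card_sdiff_of_subset hts]
  ring

theorem fallingFactorial_mul_div_fallingFactorial (x a : ℝ) (k : ℕ) (hx : ∀ i < k, x ≠ i) :
    fallingFactorial (x * a) k / fallingFactorial x k =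
      ∏ i ∈ range k, (a + (a - 1) * (i / (x - i))) := by
  rw [fallingFactorial, fallingFactorial, ← prod_div_distrib]
  refine prod_congr rfl fun i hi => ?_
  have hxi : x - i ≠ 0 := sub_ne_zero.mpr (hx i (mem_range.mp hi))
  field_simp
  ring

/-- For integers `N ≥ L ≥ 1` and real `a`,
`(Na)_L/(N)_L - a^L = ∑_{j=1}^{L-1} (a-1)^j a^{L-j}
  ∑_{1 ≤ i₁ < ⋯ < i_j ≤ L-1} (i₁⋯i_j)/((N-i₁)⋯(N-i_j))`. -/
theorem fallingFactorial_ratio_expansion (N L : ℕ) (hL : 1 ≤ L) (hNL : L ≤ N) (a : ℝ) :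
    fallingFactorial ((N : ℝ) * a) L / fallingFactorial (N : ℝ) L - a ^ L =
      ∑ j ∈ Finset.Icc 1 (L - 1), (a - 1) ^ j * a ^ (L - j) *
        ∑ s ∈ Finset.powersetCard j (Finset.Icc 1 (L - 1)),
          ∏ i ∈ s, (i : ℝ) / ((N : ℝ) - i) := by
  have hN : ∀ i < L, (N : ℝ) ≠ i := fun i hi => by
    exact_mod_cast (lt_of_lt_of_le hi hNL).ne'
  have hIcc : Icc 1 (L - 1) = Ico 1 L := by ext; simp only [mem_Icc, mem_Ico]; omega
  have hcard : #(Ico 1 L) + 1 = L := by rw [Nat.card_Ico]; omega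
  rw [fallingFactorial_mul_div_fallingFactorial _ _ _ hN, range_eq_Ico,
    prod_eq_prod_Ico_succ_bot hL, hIcc, prod_add_mul_eq_sum_powersetCard, hcard, range_eq_Ico,
    sum_eq_sum_Ico_succ_bot hL, Nat.card_Ico]
  simp only [Nat.cast_zero, zero_div, mul_zero, add_zero, pow_zero, one_mul, Nat.sub_zero,
    powersetCard_zero, sum_singleton, prod_empty, mul_one, mul_add]
  rw [mul_sum, ← pow_succ', Nat.sub_add_cancel hL, add_sub_cancel_left]
  refine sum_congr rfl fun j hj => ?_
  have hjL : L - 1 - j + 1 = L - j := by have := mem_Ico.mp hj; omega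
  rw [← hjL, pow_succ]
  ring
end

section
/- Let ρ = α/β < 1 with α, β > 0 and L ≥ 1 an integer. The unique sequence u : ℕ → ℝ with u(0) = 1, u nonincreasing, lim_{k→∞} u(k) = 0, satisfying β·u(k+1) - β·u(k) = α·u(k)^L - α·u(k-1)^L for all k ≥ 1 (stable point of the shortest-queue mean-field equation), is given by u(k) = ρ^{(L^k - 1)/(L-1)} for L ≥ 2 and u(k) = ρ^k for L = 1. -/
open Filter

/-- The unique stable point of the shortest-queue mean-field dynamics: if `u 0 = 1`,
`u` is nonincreasing with limit `0`, and `β u(k+1) - β u(k) = α u(k)^L - α u(k-1)^L`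
for all `k ≥ 1`, where `ρ = α/β < 1`, then `u(k) = ρ^{(L^k-1)/(L-1)}` for `L ≥ 2`
and `u(k) = ρ^k` for `L = 1`. -/
theorem stable_point_formula (α β : ℝ) (hα : 0 < α) (hβ : 0 < β) (hρ : α / β < 1)
    (L : ℕ) (hL : 1 ≤ L) (u : ℕ → ℝ)
    (h0 : u 0 = 1) (hmono : Antitone u) (hlim : Tendsto u atTop (nhds 0))
    (heq : ∀ k, 1 ≤ k →
      β * u (k + 1) - β * u k = α * (u k) ^ L - α * (u (k - 1)) ^ L) :
    ∀ k, u k = if L = 1 then (α / β) ^ k else (α / β) ^ ((L ^ k - 1) / (L - 1)) := by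
  have hv : ∀ k, β * u (k + 1) - α * (u k) ^ L = β * u 1 - α * (u 0) ^ L := by
    intro k
    induction k with
    | zero => rfl
    | succ n ih =>
      have h := heq (n + 1) (by omega)
      simp only [Nat.add_sub_cancel] at h
      linarith
  have hlim1 : Tendsto (fun k => u (k + 1)) atTop (nhds 0) :=
    hlim.comp (tendsto_add_atTop_nat 1)
  have hlim2 : Tendsto (fun k => β * u (k + 1) - α * (u k) ^ L) atTop (nhds 0) := by
    have := (hlim1.const_mul β).sub ((hlim.pow L).const_mul α)
    simpa [zero_pow (by omega : L ≠ 0)] using this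
  have hc : β * u 1 - α * (u 0) ^ L = 0 := by
    have h2 : Tendsto (fun _ : ℕ => β * u 1 - α * (u 0) ^ L) atTop (nhds 0) := by
      have : (fun _ : ℕ => β * u 1 - α * (u 0) ^ L)
          = fun k => β * u (k + 1) - α * (u k) ^ L := by
        funext k; exact (hv k).symm
      rw [this]; exact hlim2
    exact tendsto_nhds_unique tendsto_const_nhds h2
  have hstep : ∀ k, u (k + 1) = (α / β) * (u k) ^ L := by
    intro k
    have h := hv k
    rw [hc] at h
    have hb : β ≠ 0 := ne_of_gt hβ
    field_simp
    linarith
  intro k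
  induction k with
  | zero => simp [h0]
  | succ n ih =>
    by_cases hL1 : L = 1
    · subst hL1
      rw [hstep n, ih, if_pos rfl, if_pos rfl, pow_one, pow_succ]
      ring
    · have hL2 : 2 ≤ L := by omega
      simp only [if_neg hL1] at ih ⊢
      rw [hstep n, ih, ← pow_mul, mul_comm (α / β) _, ← pow_succ]
      congr 1
      -- exponent arithmetic
      have h1 : 1 ≤ L ^ n := Nat.one_le_pow _ _ (by omega)
      have h1' : 1 ≤ L ^ (n + 1) := Nat.one_le_pow _ _ (by omega)
      obtain ⟨m, hm⟩ := Nat.sub_dvd_pow_sub_pow L 1 n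
      rw [one_pow] at hm
      have hmZ : (L : ℤ) ^ n - 1 = ((L : ℤ) - 1) * m := by
        have := congrArg (Nat.cast : ℕ → ℤ) hm
        push_cast [h1, hL] at this
        linarith
      have keyZ : (L : ℤ) ^ (n + 1) - 1 = ((L : ℤ) - 1) * (m * L + 1) := by
        linear_combination (L : ℤ) * hmZ
      have key : L ^ (n + 1) - 1 = (L - 1) * (m * L + 1) := by
        zify [h1', hL]
        linarith [keyZ]
      have hdm : (L ^ n - 1) / (L - 1) = m := by
        rw [hm, Nat.mul_div_cancel_left _ (by omega)]
      rw [hdm, key, Nat.mul_div_cancel_left _ (by omega)]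
end

section
/- Let u : ℕ → ℝ be a stable point of the limit dynamics: u(0)=1, u nonincreasing with limit 0, and α(u(k-1)^L - u(k)^L) = β(u(k) - u(k+1)) for all k ≥ 1. Then β·u(k+1) - α·u(k)^L = β·u(1) - α for all k ≥ 0, and consequently u(1) = α/β. -/
open Filter

/-- If `u` is a stable point of the limit dynamics (`u 0 = 1`, nonincreasing, tending
to `0`, with `α(u(k-1)^L - u(k)^L) = β(u(k) - u(k+1))` for `k ≥ 1`), then
`β u(k+1) - α u(k)^L = β u(1) - α` for all `k ≥ 0`, and `u(1) = α/β`. -/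
theorem stable_point_telescoping (α β : ℝ) (hα : 0 < α) (hβ : 0 < β)
    (L : ℕ) (hL : 1 ≤ L) (u : ℕ → ℝ)
    (h0 : u 0 = 1) (hmono : Antitone u) (hlim : Tendsto u atTop (nhds 0))
    (heq : ∀ k, 1 ≤ k →
      α * ((u (k - 1)) ^ L - (u k) ^ L) = β * (u k - u (k + 1))) :
    (∀ k : ℕ, β * u (k + 1) - α * (u k) ^ L = β * u 1 - α) ∧ u 1 = α / β := by
  have key : ∀ k : ℕ, β * u (k + 1) - α * (u k) ^ L = β * u 1 - α := by
    intro k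
    induction k with
    | zero => simp [h0]
    | succ n ih =>
      have h := heq (n + 1) (by omega)
      simp only [Nat.add_sub_cancel] at h
      linarith
  refine ⟨key, ?_⟩
  have hlim2 : Tendsto (fun k => β * u (k + 1) - α * (u k) ^ L) atTop
      (nhds (β * 0 - α * 0 ^ L)) := by
    exact ((tendsto_const_nhds.mul (hlim.comp (tendsto_add_atTop_nat 1))).sub
      (tendsto_const_nhds.mul (hlim.pow L)))
  have hconst : Tendsto (fun _ : ℕ => β * u 1 - α) atTop (nhds (β * u 1 - α)) :=
    tendsto_const_nhds
  have : β * 0 - α * 0 ^ L = β * u 1 - α := by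
    apply tendsto_nhds_unique _ hconst
    exact hlim2.congr (fun k => key k)
  have hz : (0:ℝ) ^ L = 0 := zero_pow (by omega)
  rw [hz] at this
  field_simp
  linarith
end

section
/- Let w be a positive sequence on ℕ_{≥1} with c·w(k+1) ≤ w(k) ≤ d·w(k+1) for some c, d > 0. Define F₊(v)(k) = α(v(k-1)^L - v(k)^L) for k ≥ 1 (with v(0)=1). Then F₊ is Lipschitz on V = {v : v(0)=1, v nonincreasing, v(k) → 0} for the weighted norm ‖x‖² = Σ_{k≥1} x(k)² w(k)^{-1}: for u, v ∈ V, ‖F₊(u) - F₊(v)‖² ≤ 2α²L²(d+1)‖u - v‖². -/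
open Filter ENNReal

/-!
Since `t ↦ t ^ L` is `L`-Lipschitz on `[0, 1]` and sequences in `V` take values there,
`(F₊ u - F₊ v)(k + 1)² ≤ 2 α² L² ((u - v)(k)² + (u - v)(k + 1)²)`. Summed against `1 / w (k + 1)`,
the second term gives `‖u - v‖²`; the first is the norm of the backward shift of `u - v`
(which vanishes at `0`), and `w k ≤ d w (k + 1)` bounds that by `d ‖u - v‖²`.
-/

noncomputable def weightedSqNorm (w x : ℕ → ℝ) : ℝ≥0∞ :=
  ∑' k, ENNReal.ofReal (x (k + 1) ^ 2 / w (k + 1))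

theorem weightedSqNorm_shift_le {w x : ℕ → ℝ} {d : ℝ} (hw : ∀ k, 1 ≤ k → 0 < w k)
    (hdw : ∀ k, 1 ≤ k → w k ≤ d * w (k + 1)) (hd : 0 ≤ d) (hx : x 0 = 0) :
    weightedSqNorm w (fun k ↦ x (k - 1)) ≤ ENNReal.ofReal d * weightedSqNorm w x := by
  rw [weightedSqNorm, tsum_eq_zero_add' ENNReal.summable, weightedSqNorm,
    ← ENNReal.tsum_mul_left]
  simp only [Nat.add_sub_cancel, hx, ne_eq, OfNat.ofNat_ne_zero, not_false_eq_true, zero_pow,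
    zero_div, ofReal_zero, zero_add]
  refine ENNReal.tsum_le_tsum fun k ↦ ?_
  rw [← ENNReal.ofReal_mul hd]
  refine ENNReal.ofReal_le_ofReal ?_
  have hw₁ : 0 < w (k + 1) := hw _ k.succ_pos
  have hw₂ : 0 < w (k + 2) := hw _ (by omega)
  rw [mul_div_assoc', div_le_div_iff₀ hw₂ hw₁]
  nlinarith [hdw (k + 1) k.succ_pos, sq_nonneg (x (k + 1))]

theorem abs_pow_sub_pow_le_of_abs_le_one {a b : ℝ} (ha : |a| ≤ 1) (hb : |b| ≤ 1) (n : ℕ) :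
    |a ^ n - b ^ n| ≤ n * |a - b| := by
  calc |a ^ n - b ^ n| ≤ |a - b| * n * max |a| |b| ^ (n - 1) := abs_pow_sub_pow_le a b n
    _ ≤ |a - b| * n * 1 := by gcongr; exact pow_le_one₀ (by positivity) (max_le ha hb)
    _ = n * |a - b| := by ring

theorem Antitone.abs_le_one_of_tendsto_zero {u : ℕ → ℝ} (hu : Antitone u) (hu0 : u 0 = 1)
    (hlim : Tendsto u atTop (nhds 0)) (k : ℕ) : |u k| ≤ 1 :=
  abs_le.mpr ⟨by linarith [hu.le_of_tendsto hlim k], hu0 ▸ hu k.zero_le⟩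

theorem sq_sub_sub_le_two_mul {a b c d : ℝ} :
    (a - b - (c - d)) ^ 2 ≤ 2 * ((a - c) ^ 2 + (b - d) ^ 2) := by
  nlinarith [sq_nonneg (a - c + (b - d))]

/-- Only the values at `k ≥ 1` matter: at `k = 0`, `k - 1` truncates to `0`. -/
noncomputable def Fplus (α : ℝ) (L : ℕ) (v : ℕ → ℝ) (k : ℕ) : ℝ :=
  α * (v (k - 1) ^ L - v k ^ L)

theorem sq_Fplus_sub_Fplus_le (α : ℝ) (L : ℕ) {u v : ℕ → ℝ} (hu : ∀ k, |u k| ≤ 1)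
    (hv : ∀ k, |v k| ≤ 1) (k : ℕ) :
    (Fplus α L u (k + 1) - Fplus α L v (k + 1)) ^ 2 ≤
      2 * α ^ 2 * L ^ 2 * ((u k - v k) ^ 2 + (u (k + 1) - v (k + 1)) ^ 2) := by
  have hpow : ∀ k, (u k ^ L - v k ^ L) ^ 2 ≤ L ^ 2 * (u k - v k) ^ 2 := fun k ↦ by
    rw [← mul_pow]
    refine sq_le_sq.mpr ?_
    rw [abs_mul, Nat.abs_cast]
    exact abs_pow_sub_pow_le_of_abs_le_one (hu k) (hv k) L
  calc (Fplus α L u (k + 1) - Fplus α L v (k + 1)) ^ 2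
      = α ^ 2 * (u k ^ L - u (k + 1) ^ L - (v k ^ L - v (k + 1) ^ L)) ^ 2 := by
        simp only [Fplus, Nat.add_sub_cancel]; ring
    _ ≤ α ^ 2 * (2 * ((u k ^ L - v k ^ L) ^ 2 + (u (k + 1) ^ L - v (k + 1) ^ L) ^ 2)) := by
        gcongr; exact sq_sub_sub_le_two_mul
    _ ≤ α ^ 2 * (2 * (L ^ 2 * (u k - v k) ^ 2 + L ^ 2 * (u (k + 1) - v (k + 1)) ^ 2)) := by
        gcongr <;> apply hpow
    _ = _ := by ring

theorem Fplus_lipschitz_general (α : ℝ) (L : ℕ)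
    (w : ℕ → ℝ) (d : ℝ) (hd : 0 < d)
    (hw : ∀ k, 1 ≤ k → 0 < w k)
    (hdw : ∀ k, 1 ≤ k → w k ≤ d * w (k + 1))
    (u v : ℕ → ℝ)
    (hu0 : u 0 = 1) (humono : Antitone u) (hulim : Tendsto u atTop (nhds 0))
    (hv0 : v 0 = 1) (hvmono : Antitone v) (hvlim : Tendsto v atTop (nhds 0)) :
    ∑' k : ℕ, ENNReal.ofReal
        ((α * ((u k) ^ L - (u (k + 1)) ^ L) - α * ((v k) ^ L - (v (k + 1)) ^ L)) ^ 2
          / w (k + 1)) ≤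
      ENNReal.ofReal (2 * α ^ 2 * L ^ 2 * (d + 1)) *
        ∑' k : ℕ, ENNReal.ofReal ((u (k + 1) - v (k + 1)) ^ 2 / w (k + 1)) := by
  set C : ℝ := 2 * α ^ 2 * L ^ 2
  have hC : 0 ≤ C := by positivity
  have hpoint := sq_Fplus_sub_Fplus_le α L (humono.abs_le_one_of_tendsto_zero hu0 hulim)
    (hvmono.abs_le_one_of_tendsto_zero hv0 hvlim)
  have hshift := weightedSqNorm_shift_le (x := u - v) hw hdw hd.le (by simp [hu0, hv0])
  calc weightedSqNorm w (Fplus α L u - Fplus α L v)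
      ≤ ∑' k, (ENNReal.ofReal C * ENNReal.ofReal ((u k - v k) ^ 2 / w (k + 1)) +
          ENNReal.ofReal C * ENNReal.ofReal ((u (k + 1) - v (k + 1)) ^ 2 / w (k + 1))) := by
        refine ENNReal.tsum_le_tsum fun k ↦ ?_
        rw [← ENNReal.ofReal_mul hC, ← ENNReal.ofReal_mul hC]
        refine (ENNReal.ofReal_le_ofReal ?_).trans ENNReal.ofReal_add_le
        rw [← mul_add, ← add_div, mul_div_assoc']
        exact div_le_div_of_nonneg_right (hpoint k) (hw _ k.succ_pos).le
    _ = ENNReal.ofReal C * (weightedSqNorm w (fun k ↦ (u - v) (k - 1)) +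
          weightedSqNorm w (u - v)) := by
        simp only [ENNReal.tsum_add, ENNReal.tsum_mul_left, weightedSqNorm, Pi.sub_apply,
          Nat.add_sub_cancel, mul_add]
    _ ≤ ENNReal.ofReal C * (ENNReal.ofReal d * weightedSqNorm w (u - v) +
          weightedSqNorm w (u - v)) := by gcongr
    _ = ENNReal.ofReal (C * (d + 1)) * weightedSqNorm w (u - v) := by
        rw [ENNReal.ofReal_mul hC, ENNReal.ofReal_add hd.le zero_le_one, ENNReal.ofReal_one]
        ring

/-- The map `F₊(v)(k) = α(v(k-1)^L - v(k)^L)` is Lipschitz on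
`V = {v : v(0)=1, v nonincreasing, v → 0}` for the `L₂(w)` norm
(`‖x‖² = ∑_{k≥1} x(k)²/w(k)`), with constant `2α²L²(d+1)`,
when the weight satisfies `c w(k+1) ≤ w(k) ≤ d w(k+1)`. -/
theorem Fplus_lipschitz (α : ℝ) (hα : 0 < α) (L : ℕ) (hL : 1 ≤ L)
    (w : ℕ → ℝ) (c d : ℝ) (hc : 0 < c) (hd : 0 < d)
    (hw : ∀ k, 1 ≤ k → 0 < w k)
    (hcw : ∀ k, 1 ≤ k → c * w (k + 1) ≤ w k)
    (hdw : ∀ k, 1 ≤ k → w k ≤ d * w (k + 1))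
    (u v : ℕ → ℝ)
    (hu0 : u 0 = 1) (humono : Antitone u) (hulim : Tendsto u atTop (nhds 0))
    (hv0 : v 0 = 1) (hvmono : Antitone v) (hvlim : Tendsto v atTop (nhds 0)) :
    ∑' k : ℕ, ENNReal.ofReal
        ((α * ((u k) ^ L - (u (k + 1)) ^ L) - α * ((v k) ^ L - (v (k + 1)) ^ L)) ^ 2
          / w (k + 1)) ≤
      ENNReal.ofReal (2 * α ^ 2 * L ^ 2 * (d + 1)) *
        ∑' k : ℕ, ENNReal.ofReal ((u (k + 1) - v (k + 1)) ^ 2 / w (k + 1)) :=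
  Fplus_lipschitz_general α L w d hd hw hdw u v hu0 humono hulim hv0 hvmono hvlim
end

section
/- Let 0 < θ < 1. There exists K_θ < ∞ such that for every sequence x with x(0)=0 and Σ_{k≥1} x(k)² θ^{-k} < ∞ (which implies x is absolutely summable), the sequence of tails T(x)(k) = Σ_{j≥k} x(j) satisfies Σ_{k≥1} T(x)(k)² θ^{-k} ≤ K_θ² · Σ_{k≥1} x(k)² θ^{-k}. -/
/-! Work in `ℝ≥0∞`, where `‖∑ x‖ₑ ≤ ∑ ‖x‖ₑ` needs no summability and every series
converges. With `s = √θ`, AM-GM applied to each product `b_j b_l` with weight `s^l / s^j`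
gives the weighted Cauchy–Schwarz inequality `(∑ b_l)² ≤ (1 - s)⁻¹ ∑ b_l² / s^l`. Applied to
the tail at `k`, it bounds `T(k)² / θ^k` by `(1 - s)⁻¹ ∑_l s^l b_{k+l}² / θ^{k+l}`; summing
over `k` and exchanging the sums gives the constant `K_θ = (1 - √θ)⁻¹`. Since `x 0 = 0`, the
sums may start at `0`. -/

open scoped NNReal

namespace ENNReal

theorem two_mul_le_add_sq (a b : ℝ≥0∞) : 2 * a * b ≤ a ^ 2 + b ^ 2 := by
  rcases eq_or_ne a ⊤ with rfl | ha
  · simp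
  rcases eq_or_ne b ⊤ with rfl | hb
  · simp
  lift a to ℝ≥0 using ha
  lift b to ℝ≥0 using hb
  exact_mod_cast _root_.two_mul_le_add_sq a b

theorem two_mul_le_mul_sq_add_inv_mul_sq {u : ℝ≥0∞} (hu0 : u ≠ 0) (hu : u ≠ ⊤)
    (a b : ℝ≥0∞) :
    2 * a * b ≤ u * a ^ 2 + u⁻¹ * b ^ 2 := by
  have hinv : u⁻¹ * u = 1 := ENNReal.inv_mul_cancel hu0 hu
  calc 2 * a * b = u⁻¹ * (2 * (u * a) * b) := by
        rw [← one_mul (2 * a * b), ← hinv]; ring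
    _ ≤ u⁻¹ * ((u * a) ^ 2 + b ^ 2) := by gcongr; exact two_mul_le_add_sq _ _
    _ = u⁻¹ * u * (u * a ^ 2) + u⁻¹ * b ^ 2 := by ring
    _ = u * a ^ 2 + u⁻¹ * b ^ 2 := by rw [hinv, one_mul]

theorem sq_tsum_le_mul_tsum_div_pow {s : ℝ≥0∞} (hs0 : s ≠ 0) (hs1 : s < 1)
    (b : ℕ → ℝ≥0∞) :
    (∑' j, b j) ^ 2 ≤ (1 - s)⁻¹ * ∑' j, b j ^ 2 / s ^ j := by
  have hsT : s ≠ ⊤ := hs1.ne_top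
  have amgm : ∀ j l,
      2 * (b j * b l) ≤ s ^ l * (b j ^ 2 / s ^ j) + s ^ j * (b l ^ 2 / s ^ l) := by
    intro j l
    have h := two_mul_le_mul_sq_add_inv_mul_sq (u := s ^ l / s ^ j)
      (ENNReal.div_pos (pow_ne_zero _ hs0) (pow_ne_top hsT)).ne'
      (ENNReal.div_ne_top (pow_ne_top hsT) (pow_ne_zero _ hs0)) (b j) (b l)
    rw [ENNReal.inv_div (.inl (pow_ne_top hsT)) (.inl (pow_ne_zero _ hs0))] at h
    calc 2 * (b j * b l) = 2 * b j * b l := (mul_assoc ..).symm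
      _ ≤ _ := h
      _ = _ := by simp only [div_eq_mul_inv]; ring
  have expand : (∑' j, b j) ^ 2 = ∑' j, ∑' l, b j * b l := by
    rw [sq, ← ENNReal.tsum_mul_right]
    exact tsum_congr fun j => ENNReal.tsum_mul_left.symm
  have geometric :
      ∑' j, ∑' l, s ^ j * (b l ^ 2 / s ^ l) = (1 - s)⁻¹ * ∑' l, b l ^ 2 / s ^ l := by
    simp only [ENNReal.tsum_mul_left, ENNReal.tsum_mul_right, ENNReal.tsum_geometric]
  rw [← ENNReal.mul_le_mul_iff_right two_ne_zero ofNat_ne_top]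
  calc 2 * (∑' j, b j) ^ 2 = ∑' j, ∑' l, 2 * (b j * b l) := by
        simp only [expand, ENNReal.tsum_mul_left]
    _ ≤ ∑' j, ∑' l, (s ^ l * (b j ^ 2 / s ^ j) + s ^ j * (b l ^ 2 / s ^ l)) :=
        ENNReal.tsum_le_tsum fun j => ENNReal.tsum_le_tsum (amgm j)
    _ = 2 * ((1 - s)⁻¹ * ∑' j, b j ^ 2 / s ^ j) := by
        simp only [ENNReal.tsum_add]
        rw [ENNReal.tsum_comm, geometric, two_mul]

theorem tsum_sq_tsum_nat_add_div_pow_le {s : ℝ≥0∞} (hs0 : s ≠ 0) (hs1 : s < 1)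
    (b : ℕ → ℝ≥0∞) :
    ∑' k, (∑' j, b (k + j)) ^ 2 / s ^ (2 * k) ≤ (1 - s)⁻¹ ^ 2 * ∑' k, b k ^ 2 / s ^ (2 * k) := by
  have reweight (a : ℝ≥0∞) (k l : ℕ) :
      a / s ^ l / s ^ (2 * k) = s ^ l * (a / s ^ (2 * (k + l))) := by
    simp only [div_eq_mul_inv, ENNReal.inv_pow]
    calc a * s⁻¹ ^ l * s⁻¹ ^ (2 * k)
        = (s * s⁻¹) ^ l * (a * s⁻¹ ^ l * s⁻¹ ^ (2 * k)) := by
          rw [ENNReal.mul_inv_cancel hs0 hs1.ne_top, one_pow, one_mul]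
      _ = s ^ l * (a * s⁻¹ ^ (2 * (k + l))) := by ring
  calc ∑' k, (∑' j, b (k + j)) ^ 2 / s ^ (2 * k)
      ≤ ∑' k, (1 - s)⁻¹ * (∑' l, b (k + l) ^ 2 / s ^ l) / s ^ (2 * k) := by
        gcongr with k
        exact sq_tsum_le_mul_tsum_div_pow hs0 hs1 _
    _ = (1 - s)⁻¹ * ∑' k, ∑' l, b (k + l) ^ 2 / s ^ l / s ^ (2 * k) := by
        rw [← ENNReal.tsum_mul_left]
        refine tsum_congr fun k => ?_
        rw [mul_div_assoc, div_eq_mul_inv, ← ENNReal.tsum_mul_right]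
        simp only [← div_eq_mul_inv]
    _ = (1 - s)⁻¹ * ∑' l, s ^ l * ∑' k, b (k + l) ^ 2 / s ^ (2 * (k + l)) := by
        simp only [reweight]
        rw [ENNReal.tsum_comm]
        simp only [ENNReal.tsum_mul_left]
    _ ≤ (1 - s)⁻¹ * ∑' l, s ^ l * ∑' m, b m ^ 2 / s ^ (2 * m) := by
        gcongr _ * ∑' l, _ * ?_ with l
        exact ENNReal.tsum_comp_le_tsum_of_injective (add_left_injective l)
          fun m => b m ^ 2 / s ^ (2 * m)
    _ = (1 - s)⁻¹ ^ 2 * ∑' k, b k ^ 2 / s ^ (2 * k) := by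
        rw [ENNReal.tsum_mul_right, ENNReal.tsum_geometric, sq, mul_assoc]

end ENNReal

theorem ofReal_sq_div_pow_eq_enorm_sq_div {θ : ℝ} (hθ : 0 < θ) (t : ℝ) (n : ℕ) :
    ENNReal.ofReal (t ^ 2 / θ ^ n) = ‖t‖ₑ ^ 2 / ENNReal.ofReal √θ ^ (2 * n) := by
  rw [ENNReal.ofReal_div_of_pos (pow_pos hθ n), Real.enorm_eq_ofReal_abs,
    ← ENNReal.ofReal_pow (abs_nonneg t), sq_abs, ← ENNReal.ofReal_pow (Real.sqrt_nonneg θ),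
    pow_mul, Real.sq_sqrt hθ.le]

/-- Tail-sum bound in `L₂(g_θ)`: for `0 < θ < 1` there is `K_θ < ∞` such that for
every sequence `x` with `x(0) = 0` and finite `L₂(g_θ)` norm, the tails
`T(x)(k) = ∑_{j ≥ k} x(j)` satisfy
`∑_{k≥1} T(x)(k)² θ^{-k} ≤ K_θ² ∑_{k≥1} x(k)² θ^{-k}`. -/
theorem tail_sums_bounded (θ : ℝ) (hθ0 : 0 < θ) (hθ1 : θ < 1) :
    ∃ K : ℝ, 0 < K ∧ ∀ x : ℕ → ℝ, x 0 = 0 →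
      (∑' k : ℕ, ENNReal.ofReal ((x (k + 1)) ^ 2 / θ ^ (k + 1)) ≠ ⊤) →
      ∑' k : ℕ, ENNReal.ofReal ((∑' j : ℕ, x (k + 1 + j)) ^ 2 / θ ^ (k + 1)) ≤
        ENNReal.ofReal (K ^ 2) *
          ∑' k : ℕ, ENNReal.ofReal ((x (k + 1)) ^ 2 / θ ^ (k + 1)) := by
  have hsqrt1 : √θ < 1 := (Real.sqrt_lt' one_pos).2 (by simpa using hθ1)
  set s := ENNReal.ofReal √θ
  have hs0 : s ≠ 0 := by positivity
  have hs1 : s < 1 := ENNReal.ofReal_lt_one.mpr hsqrt1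
  refine ⟨(1 - √θ)⁻¹, inv_pos.2 (sub_pos.2 hsqrt1), fun x hx0 _ => ?_⟩
  have hK : ENNReal.ofReal ((1 - √θ)⁻¹ ^ 2) = (1 - s)⁻¹ ^ 2 := by
    rw [ENNReal.ofReal_pow (inv_nonneg.2 (sub_nonneg.2 hsqrt1.le)),
      ENNReal.ofReal_inv_of_pos (sub_pos.2 hsqrt1),
      ENNReal.ofReal_sub _ (Real.sqrt_nonneg θ), ENNReal.ofReal_one]
  simp only [ofReal_sq_div_pow_eq_enorm_sq_div hθ0, hK]
  calc ∑' k, ‖∑' j, x (k + 1 + j)‖ₑ ^ 2 / s ^ (2 * (k + 1))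
      ≤ ∑' k, (∑' j, ‖x (k + 1 + j)‖ₑ) ^ 2 / s ^ (2 * (k + 1)) := by
        gcongr
        exact enorm_tsum_le_tsum_enorm
    _ ≤ ∑' k, (∑' j, ‖x (k + j)‖ₑ) ^ 2 / s ^ (2 * k) := by
        rw [tsum_eq_zero_add' (f := fun k => (∑' j, ‖x (k + j)‖ₑ) ^ 2 / s ^ (2 * k))
          ENNReal.summable]
        exact le_add_self
    _ ≤ (1 - s)⁻¹ ^ 2 * ∑' k, ‖x k‖ₑ ^ 2 / s ^ (2 * k) :=
        ENNReal.tsum_sq_tsum_nat_add_div_pow_le hs0 hs1 _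
    _ = (1 - s)⁻¹ ^ 2 * ∑' k, ‖x (k + 1)‖ₑ ^ 2 / s ^ (2 * (k + 1)) := by
        rw [tsum_eq_zero_add' (f := fun k => ‖x k‖ₑ ^ 2 / s ^ (2 * k)) ENNReal.summable, hx0]
        simp
end

section
/- Let v be a sequence with 0 ≤ v(k) ≤ 1 for all k, and w a positive sequence with c·w(k+1) ≤ w(k) ≤ d·w(k+1) for c, d > 0. Define the operator K(v) on sequences vanishing at 0 by K(v)x(k) = αL v(k-1)^{L-1} x(k-1) - (αL v(k)^{L-1} + β)x(k) + β x(k+1) for k ≥ 1 (with x(0) = 0). Then K(v) is a bounded operator on L₂(w) with ‖K(v)x‖²_{L₂(w)} ≤ 2(αL+β)(αL(d+1) + β(c^{-1}+1))·‖x‖²_{L₂(w)}, uniformly in v. -/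
/-!
Writing `u k = x(k)² / w(k)` (so `u 0 = 0`), the weighted Cauchy–Schwarz inequality
`(a p - (b + β) q + β r)² ≤ (a + b + 2β)(a p² + (b + β) q² + β r²)` bounds the `k`-th term of
`‖K(v)x‖²` by `2(αL + β)(αL d · u k + (αL + β) u (k+1) + β c⁻¹ u (k+2))`: the weight is moved from
`w(k+1)` to `w(k)` with `w(k) ≤ d w(k+1)` and to `w(k+2)` with `c w(k+2) ≤ w(k+1)`. Each of the three
shifted sums of `u` is at most `‖x‖²`.
-/

open ENNReal

lemma sq_sub_add_le_mul {a b β : ℝ} (p q r : ℝ) (ha : 0 ≤ a) (hb : 0 ≤ b) (hβ : 0 ≤ β) :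
    (a * p - (b + β) * q + β * r) ^ 2 ≤
      (a + b + 2 * β) * (a * p ^ 2 + (b + β) * q ^ 2 + β * r ^ 2) := by
  nlinarith [mul_nonneg (mul_nonneg ha hb) (sq_nonneg (p + q)),
    mul_nonneg (mul_nonneg ha hβ) (sq_nonneg (p + q)),
    mul_nonneg (mul_nonneg ha hβ) (sq_nonneg (p - r)),
    mul_nonneg (mul_nonneg hb hβ) (sq_nonneg (q + r)),
    mul_nonneg (mul_nonneg hβ hβ) (sq_nonneg (q + r))]

lemma div_le_mul_div_of_le_mul {t w w' d : ℝ} (ht : 0 ≤ t) (hw : 0 < w) (hw' : 0 < w')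
    (h : w ≤ d * w') : t / w' ≤ d * (t / w) := by
  rw [div_le_iff₀ hw', mul_div_assoc', div_mul_eq_mul_div, le_div_iff₀ hw]
  nlinarith [mul_le_mul_of_nonneg_left h ht]

lemma tsum_ofReal_le_of_le_shifts {g u : ℕ → ℝ} {C P Q R : ℝ} (hC : 0 ≤ C) (hP : 0 ≤ P)
    (hQ : 0 ≤ Q) (hR : 0 ≤ R) (hu : ∀ k, 0 ≤ u k) (hu0 : u 0 = 0)
    (hg : ∀ k, g k ≤ C * (P * u k + Q * u (k + 1) + R * u (k + 2))) :
    ∑' k, ENNReal.ofReal (g k) ≤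
      ENNReal.ofReal (C * (P + Q + R)) * ∑' k, ENNReal.ofReal (u (k + 1)) := by
  set U : ℕ → ℝ≥0∞ := fun k ↦ ENNReal.ofReal (u k)
  have hU : ∑' k, U k = ∑' k, U (k + 1) := by
    rw [tsum_eq_zero_add' ENNReal.summable, show U 0 = 0 by simp [U, hu0], zero_add]
  have hU₂ : ∑' k, U (k + 2) ≤ ∑' k, U (k + 1) := by
    rw [tsum_eq_zero_add' (f := fun k ↦ U (k + 1)) ENNReal.summable]
    exact le_add_self
  have hpt : ∀ k, ENNReal.ofReal (g k) ≤ ENNReal.ofReal C *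
      (ENNReal.ofReal P * U k + ENNReal.ofReal Q * U (k + 1) + ENNReal.ofReal R * U (k + 2)) := by
    intro k
    refine (ENNReal.ofReal_le_ofReal (hg k)).trans_eq ?_
    have hPu := mul_nonneg hP (hu k)
    have hQu := mul_nonneg hQ (hu (k + 1))
    have hRu := mul_nonneg hR (hu (k + 2))
    rw [ENNReal.ofReal_mul hC, ENNReal.ofReal_add (add_nonneg hPu hQu) hRu,
      ENNReal.ofReal_add hPu hQu, ENNReal.ofReal_mul hP, ENNReal.ofReal_mul hQ,
      ENNReal.ofReal_mul hR]
  calc ∑' k, ENNReal.ofReal (g k)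
      ≤ ENNReal.ofReal C * (ENNReal.ofReal P * ∑' k, U k + ENNReal.ofReal Q * ∑' k, U (k + 1)
          + ENNReal.ofReal R * ∑' k, U (k + 2)) := by
        refine (ENNReal.tsum_le_tsum hpt).trans_eq ?_
        simp only [ENNReal.tsum_mul_left, ENNReal.tsum_add]
    _ ≤ ENNReal.ofReal C * ((ENNReal.ofReal P + ENNReal.ofReal Q + ENNReal.ofReal R)
          * ∑' k, U (k + 1)) := by
        rw [hU, add_mul, add_mul]
        gcongr
    _ = ENNReal.ofReal (C * (P + Q + R)) * ∑' k, U (k + 1) := by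
        rw [← ENNReal.ofReal_add hP hQ, ← ENNReal.ofReal_add (add_nonneg hP hQ) hR,
          ← mul_assoc, ← ENNReal.ofReal_mul hC]

lemma tridiag_sq_div_le_shifts {A β c d : ℝ} {a w x : ℕ → ℝ} (hβ : 0 ≤ β) (ha : ∀ k, 0 ≤ a k ∧ a k ≤ A) (hc : 0 < c)
    (hw : ∀ k, 1 ≤ k → 0 < w k)
    (hcw : ∀ k, 1 ≤ k → c * w (k + 1) ≤ w k)
    (hdw : ∀ k, 1 ≤ k → w k ≤ d * w (k + 1))
    (hx : x 0 = 0) (k : ℕ) :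
    (a k * x k - (a (k + 1) + β) * x (k + 1) + β * x (k + 2)) ^ 2 / w (k + 1) ≤
      2 * (A + β) * (A * d * (x k ^ 2 / w k) + (A + β) * (x (k + 1) ^ 2 / w (k + 1))
        + β * c⁻¹ * (x (k + 2) ^ 2 / w (k + 2))) := by
  obtain ⟨hak, hakA⟩ := ha k
  obtain ⟨hak₁, hak₁A⟩ := ha (k + 1)
  have hw₁ : 0 < w (k + 1) := hw _ k.succ_pos
  have hw₂ : 0 < w (k + 2) := hw _ (by omega)
  have hp : x k ^ 2 / w (k + 1) ≤ d * (x k ^ 2 / w k) := by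
    rcases k.eq_zero_or_pos with rfl | hk
    · simp [hx]
    · exact div_le_mul_div_of_le_mul (sq_nonneg _) (hw k hk) hw₁ (hdw k hk)
  have hr : x (k + 2) ^ 2 / w (k + 1) ≤ c⁻¹ * (x (k + 2) ^ 2 / w (k + 2)) :=
    div_le_mul_div_of_le_mul (sq_nonneg _) hw₂ hw₁
      ((le_inv_mul_iff₀ hc).2 (hcw (k + 1) k.succ_pos))
  have hu₀ : 0 ≤ x k ^ 2 / w (k + 1) := div_nonneg (sq_nonneg _) hw₁.le
  have hu₁ : 0 ≤ x (k + 1) ^ 2 / w (k + 1) := div_nonneg (sq_nonneg _) hw₁.le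
  calc _ ≤ (a k + a (k + 1) + 2 * β) * (a k * x k ^ 2 + (a (k + 1) + β) * x (k + 1) ^ 2
          + β * x (k + 2) ^ 2) / w (k + 1) :=
        div_le_div_of_nonneg_right (sq_sub_add_le_mul _ _ _ hak hak₁ hβ) hw₁.le
    _ = (a k + a (k + 1) + 2 * β) * (a k * (x k ^ 2 / w (k + 1))
          + (a (k + 1) + β) * (x (k + 1) ^ 2 / w (k + 1)) + β * (x (k + 2) ^ 2 / w (k + 1))) := by
        ring
    _ ≤ 2 * (A + β) * (A * (d * (x k ^ 2 / w k)) + (A + β) * (x (k + 1) ^ 2 / w (k + 1))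
          + β * (c⁻¹ * (x (k + 2) ^ 2 / w (k + 2)))) := by
        refine mul_le_mul (by linarith) (add_le_add (add_le_add ?_ ?_) ?_) (by positivity)
          (by linarith)
        · exact mul_le_mul hakA hp hu₀ (hak.trans hakA)
        · exact mul_le_mul_of_nonneg_right (by linarith) hu₁
        · exact mul_le_mul_of_nonneg_left hr hβ
    _ = _ := by ring

theorem K_operator_bounded_general (α β : ℝ) (hα : 0 < α) (hβ : 0 < β) (L : ℕ)
    (v : ℕ → ℝ) (hv : ∀ k, 0 ≤ v k ∧ v k ≤ 1)
    (w : ℕ → ℝ) (c d : ℝ) (hc : 0 < c)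
    (hw : ∀ k, 1 ≤ k → 0 < w k)
    (hcw : ∀ k, 1 ≤ k → c * w (k + 1) ≤ w k)
    (hdw : ∀ k, 1 ≤ k → w k ≤ d * w (k + 1))
    (x : ℕ → ℝ) (hx : x 0 = 0) :
    ∑' k : ℕ, ENNReal.ofReal
        ((α * L * (v k) ^ (L - 1) * x k -
            (α * L * (v (k + 1)) ^ (L - 1) + β) * x (k + 1) + β * x (k + 2)) ^ 2
          / w (k + 1)) ≤
      ENNReal.ofReal (2 * (α * L + β) * (α * L * (d + 1) + β * (c⁻¹ + 1))) *
        ∑' k : ℕ, ENNReal.ofReal ((x (k + 1)) ^ 2 / w (k + 1)) := by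
  have hA : 0 ≤ α * L := by positivity
  have hd : 0 ≤ d :=
    (pos_of_mul_pos_left ((hw 1 le_rfl).trans_le (hdw 1 le_rfl)) (hw 2 (by norm_num)).le).le
  have ha : ∀ k, 0 ≤ α * L * v k ^ (L - 1) ∧ α * L * v k ^ (L - 1) ≤ α * L := fun k ↦
    ⟨by have := (hv k).1; positivity,
      mul_le_of_le_one_right hA (pow_le_one₀ (hv k).1 (hv k).2)⟩
  have hu : ∀ k, 0 ≤ x k ^ 2 / w k
    | 0 => by simp [hx]
    | k + 1 => div_nonneg (sq_nonneg _) (hw _ k.succ_pos).le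
  rw [show 2 * (α * L + β) * (α * L * (d + 1) + β * (c⁻¹ + 1)) =
      2 * (α * L + β) * (α * L * d + (α * L + β) + β * c⁻¹) by ring]
  exact tsum_ofReal_le_of_le_shifts (by positivity) (by positivity) (by positivity)
    (by positivity) hu (by simp [hx]) (tridiag_sq_div_le_shifts hβ.le ha hc hw hcw hdw hx)

/-- For `v` with values in `[0,1]` and a weight `w` with `c w(k+1) ≤ w(k) ≤ d w(k+1)`,
the operator `K(v)x(k) = αL v(k-1)^{L-1} x(k-1) - (αL v(k)^{L-1} + β) x(k) + β x(k+1)`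
is bounded on `L₂(w)` with norm bound `2(αL+β)(αL(d+1)+β(c⁻¹+1))`, uniformly in `v`. -/
theorem K_operator_bounded (α β : ℝ) (hα : 0 < α) (hβ : 0 < β) (L : ℕ) (hL : 1 ≤ L)
    (v : ℕ → ℝ) (hv : ∀ k, 0 ≤ v k ∧ v k ≤ 1)
    (w : ℕ → ℝ) (c d : ℝ) (hc : 0 < c) (hd : 0 < d)
    (hw : ∀ k, 1 ≤ k → 0 < w k)
    (hcw : ∀ k, 1 ≤ k → c * w (k + 1) ≤ w k)
    (hdw : ∀ k, 1 ≤ k → w k ≤ d * w (k + 1))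
    (x : ℕ → ℝ) (hx : x 0 = 0) :
    ∑' k : ℕ, ENNReal.ofReal
        ((α * L * (v k) ^ (L - 1) * x k -
            (α * L * (v (k + 1)) ^ (L - 1) + β) * x (k + 1) + β * x (k + 2)) ^ 2
          / w (k + 1)) ≤
      ENNReal.ofReal (2 * (α * L + β) * (α * L * (d + 1) + β * (c⁻¹ + 1))) *
        ∑' k : ℕ, ENNReal.ofReal ((x (k + 1)) ^ 2 / w (k + 1)) :=
  K_operator_bounded_general α β hα hβ L v hv w c d hc hw hcw hdw x hx
end

section
/- Let 0 < ρ < 1, L ≥ 1, β > 0, and let w be a positive sequence with 0 < c·w(k+1) ≤ w(k) ≤ d·ρ^{-2L^k}·w(k+1) for all k ≥ 1 and some c, d > 0. Define the operator 𝒦 on sequences x vanishing at 0 by 𝒦x(k) = βLρ^{L^{k-1}}x(k-1) - (βLρ^{L^k} + β)x(k) + βx(k+1). Then 𝒦 is bounded on L₂(w) with ‖𝒦x‖²_{L₂(w)} ≤ β²(2L+2)(Lρ^{2L} + Ld + c^{-1} + 1)·‖x‖²_{L₂(w)}. -/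
open ENNReal

lemma quad_bound_aux (n u v s t : ℝ) (hn : 0 ≤ n) :
    (n * u + n * v + s + t) ^ 2 ≤ (2 * n + 2) * (n * u ^ 2 + n * v ^ 2 + s ^ 2 + t ^ 2) := by
  nlinarith [mul_nonneg (mul_nonneg hn hn) (sq_nonneg (u - v)),
    mul_nonneg hn (sq_nonneg (u - s)), mul_nonneg hn (sq_nonneg (u - t)),
    mul_nonneg hn (sq_nonneg (v - s)), mul_nonneg hn (sq_nonneg (v - t)),
    sq_nonneg (s - t)]

/-- For a weight `w` with `c w(k+1) ≤ w(k) ≤ d ρ^{-2L^k} w(k+1)`, the operator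
`𝒦x(k) = βLρ^{L^{k-1}} x(k-1) - (βLρ^{L^k} + β) x(k) + β x(k+1)` is bounded on
`L₂(w)` with norm bound `β²(2L+2)(Lρ^{2L} + Ld + c⁻¹ + 1)`. -/
theorem calK_operator_bounded (ρ β : ℝ) (hρ0 : 0 < ρ) (hρ1 : ρ < 1) (hβ : 0 < β)
    (L : ℕ) (hL : 1 ≤ L)
    (w : ℕ → ℝ) (c d : ℝ) (hc : 0 < c) (hd : 0 < d)
    (hw : ∀ k, 1 ≤ k → 0 < w k)
    (hcw : ∀ k, 1 ≤ k → c * w (k + 1) ≤ w k)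
    (hdw : ∀ k, 1 ≤ k → w k ≤ d * (ρ ^ (2 * L ^ k))⁻¹ * w (k + 1))
    (x : ℕ → ℝ) (hx : x 0 = 0) :
    ∑' k : ℕ, ENNReal.ofReal
        ((β * L * ρ ^ (L ^ k) * x k -
            (β * L * ρ ^ (L ^ (k + 1)) + β) * x (k + 1) + β * x (k + 2)) ^ 2
          / w (k + 1)) ≤
      ENNReal.ofReal (β ^ 2 * (2 * L + 2) * (L * ρ ^ (2 * L) + L * d + c⁻¹ + 1)) *
        ∑' k : ℕ, ENNReal.ofReal ((x (k + 1)) ^ 2 / w (k + 1)) := by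
  set S : ℝ≥0∞ := ∑' k : ℕ, ENNReal.ofReal ((x (k + 1)) ^ 2 / w (k + 1)) with hS
  -- the four constants
  set C1 : ℝ := β ^ 2 * (2 * L + 2) * (L * d) with hC1
  set C2 : ℝ := β ^ 2 * (2 * L + 2) * (L * ρ ^ (2 * L)) with hC2
  set C3 : ℝ := β ^ 2 * (2 * L + 2) with hC3
  set C4 : ℝ := β ^ 2 * (2 * L + 2) * c⁻¹ with hC4
  have hLpos : (0:ℝ) < (L:ℝ) := by exact_mod_cast Nat.lt_of_lt_of_le Nat.zero_lt_one hL
  have hM : (0:ℝ) ≤ β ^ 2 * (2 * L + 2) := by positivity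
  have hC1n : 0 ≤ C1 := by rw [hC1]; positivity
  have hC2n : 0 ≤ C2 := by rw [hC2]; positivity
  have hC3n : 0 ≤ C3 := by rw [hC3]; positivity
  have hC4n : 0 ≤ C4 := by rw [hC4]; positivity
  -- pointwise real estimate
  have hpt : ∀ k : ℕ,
      (β * L * ρ ^ (L ^ k) * x k -
          (β * L * ρ ^ (L ^ (k + 1)) + β) * x (k + 1) + β * x (k + 2)) ^ 2 / w (k + 1)
        ≤ C1 * ((x k) ^ 2 / w k) + C2 * ((x (k + 1)) ^ 2 / w (k + 1))
          + C3 * ((x (k + 1)) ^ 2 / w (k + 1)) + C4 * ((x (k + 2)) ^ 2 / w (k + 2)) := by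
    intro k
    have hw1 : 0 < w (k + 1) := hw (k + 1) (by omega)
    have hw2 : 0 < w (k + 2) := hw (k + 2) (by omega)
    -- Cauchy-Schwarz step
    have hquad : (β * L * ρ ^ (L ^ k) * x k -
          (β * L * ρ ^ (L ^ (k + 1)) + β) * x (k + 1) + β * x (k + 2)) ^ 2
        ≤ β ^ 2 * (2 * L + 2) * ((L : ℝ) * (ρ ^ (2 * L ^ k) * (x k) ^ 2)
            + (L : ℝ) * (ρ ^ (2 * L ^ (k + 1)) * (x (k + 1)) ^ 2)
            + (x (k + 1)) ^ 2 + (x (k + 2)) ^ 2) := by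
      have h := quad_bound_aux (L : ℝ) (β * ρ ^ (L ^ k) * x k)
        (-(β * ρ ^ (L ^ (k + 1)) * x (k + 1))) (-(β * x (k + 1))) (β * x (k + 2))
        hLpos.le
      calc (β * L * ρ ^ (L ^ k) * x k -
            (β * L * ρ ^ (L ^ (k + 1)) + β) * x (k + 1) + β * x (k + 2)) ^ 2
          = ((L : ℝ) * (β * ρ ^ (L ^ k) * x k)
              + (L : ℝ) * (-(β * ρ ^ (L ^ (k + 1)) * x (k + 1)))
              + (-(β * x (k + 1))) + β * x (k + 2)) ^ 2 := by ring
        _ ≤ (2 * (L : ℝ) + 2) * ((L : ℝ) * (β * ρ ^ (L ^ k) * x k) ^ 2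
              + (L : ℝ) * (-(β * ρ ^ (L ^ (k + 1)) * x (k + 1))) ^ 2
              + (-(β * x (k + 1))) ^ 2 + (β * x (k + 2)) ^ 2) := h
        _ = β ^ 2 * (2 * L + 2) * ((L : ℝ) * (ρ ^ (2 * L ^ k) * (x k) ^ 2)
              + (L : ℝ) * (ρ ^ (2 * L ^ (k + 1)) * (x (k + 1)) ^ 2)
              + (x (k + 1)) ^ 2 + (x (k + 2)) ^ 2) := by
            rw [show (2 * L ^ k) = L ^ k * 2 by ring,
              show (2 * L ^ (k + 1)) = L ^ (k + 1) * 2 by ring, pow_mul, pow_mul]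
            ring
    -- term A
    have hA : ρ ^ (2 * L ^ k) * (x k) ^ 2 / w (k + 1) ≤ d * (x k) ^ 2 / w k := by
      rcases Nat.eq_zero_or_pos k with hk | hk
      · subst hk; simp [hx]
      · have hwk : 0 < w k := hw k hk
        have hpe : (0:ℝ) < ρ ^ (2 * L ^ k) := pow_pos hρ0 _
        have key : ρ ^ (2 * L ^ k) * w k ≤ d * w (k + 1) := by
          have h := hdw k hk
          calc ρ ^ (2 * L ^ k) * w k
              ≤ ρ ^ (2 * L ^ k) * (d * (ρ ^ (2 * L ^ k))⁻¹ * w (k + 1)) :=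
                mul_le_mul_of_nonneg_left h hpe.le
            _ = d * w (k + 1) := by field_simp
        rw [div_le_div_iff₀ hw1 hwk]
        nlinarith [mul_le_mul_of_nonneg_left key (sq_nonneg (x k))]
    -- term B
    have hB : ρ ^ (2 * L ^ (k + 1)) * (x (k + 1)) ^ 2 / w (k + 1)
        ≤ ρ ^ (2 * L) * (x (k + 1)) ^ 2 / w (k + 1) := by
      have hle : ρ ^ (2 * L ^ (k + 1)) ≤ ρ ^ (2 * L) := by
        apply pow_le_pow_of_le_one hρ0.le hρ1.le
        have : L ≤ L ^ (k + 1) := by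
          calc L = L ^ 1 := (pow_one L).symm
            _ ≤ L ^ (k + 1) := Nat.pow_le_pow_right (by omega) (by omega)
        omega
      exact (div_le_div_iff_of_pos_right hw1).mpr (mul_le_mul_of_nonneg_right hle (sq_nonneg _))
    -- term D
    have hD : (x (k + 2)) ^ 2 / w (k + 1) ≤ c⁻¹ * (x (k + 2)) ^ 2 / w (k + 2) := by
      have key : w (k + 2) ≤ c⁻¹ * w (k + 1) := by
        have h := hcw (k + 1) (by omega)
        rw [le_inv_mul_iff₀ hc]
        linarith
      rw [div_le_div_iff₀ hw1 hw2]
      nlinarith [mul_le_mul_of_nonneg_left key (sq_nonneg (x (k + 2)))]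
    calc (β * L * ρ ^ (L ^ k) * x k -
          (β * L * ρ ^ (L ^ (k + 1)) + β) * x (k + 1) + β * x (k + 2)) ^ 2 / w (k + 1)
        ≤ (β ^ 2 * (2 * L + 2) * ((L : ℝ) * (ρ ^ (2 * L ^ k) * (x k) ^ 2)
            + (L : ℝ) * (ρ ^ (2 * L ^ (k + 1)) * (x (k + 1)) ^ 2)
            + (x (k + 1)) ^ 2 + (x (k + 2)) ^ 2)) / w (k + 1) :=
          (div_le_div_iff_of_pos_right hw1).mpr hquad
      _ = β ^ 2 * (2 * L + 2) * ((L : ℝ) * (ρ ^ (2 * L ^ k) * (x k) ^ 2 / w (k + 1))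
            + (L : ℝ) * (ρ ^ (2 * L ^ (k + 1)) * (x (k + 1)) ^ 2 / w (k + 1))
            + (x (k + 1)) ^ 2 / w (k + 1) + (x (k + 2)) ^ 2 / w (k + 1)) := by ring
      _ ≤ β ^ 2 * (2 * L + 2) * ((L : ℝ) * (d * (x k) ^ 2 / w k)
            + (L : ℝ) * (ρ ^ (2 * L) * (x (k + 1)) ^ 2 / w (k + 1))
            + (x (k + 1)) ^ 2 / w (k + 1) + (c⁻¹ * (x (k + 2)) ^ 2 / w (k + 2))) := by
          apply mul_le_mul_of_nonneg_left _ hM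
          exact add_le_add (add_le_add (add_le_add
            (mul_le_mul_of_nonneg_left hA hLpos.le)
            (mul_le_mul_of_nonneg_left hB hLpos.le)) le_rfl) hD
      _ = C1 * ((x k) ^ 2 / w k) + C2 * ((x (k + 1)) ^ 2 / w (k + 1))
          + C3 * ((x (k + 1)) ^ 2 / w (k + 1)) + C4 * ((x (k + 2)) ^ 2 / w (k + 2)) := by
          rw [hC1, hC2, hC3, hC4]; ring
  -- pass to ENNReal termwise
  have hterm : ∀ k : ℕ, ENNReal.ofReal
        ((β * L * ρ ^ (L ^ k) * x k -
            (β * L * ρ ^ (L ^ (k + 1)) + β) * x (k + 1) + β * x (k + 2)) ^ 2 / w (k + 1))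
      ≤ ENNReal.ofReal C1 * ENNReal.ofReal ((x k) ^ 2 / w k)
        + ENNReal.ofReal C2 * ENNReal.ofReal ((x (k + 1)) ^ 2 / w (k + 1))
        + ENNReal.ofReal C3 * ENNReal.ofReal ((x (k + 1)) ^ 2 / w (k + 1))
        + ENNReal.ofReal C4 * ENNReal.ofReal ((x (k + 2)) ^ 2 / w (k + 2)) := by
    intro k
    refine le_trans (ENNReal.ofReal_le_ofReal (hpt k)) ?_
    refine le_trans ENNReal.ofReal_add_le ?_
    refine add_le_add (le_trans ENNReal.ofReal_add_le (add_le_add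
      (le_trans ENNReal.ofReal_add_le (add_le_add ?_ ?_)) ?_)) ?_
    · exact (ENNReal.ofReal_mul hC1n).le
    · exact (ENNReal.ofReal_mul hC2n).le
    · exact (ENNReal.ofReal_mul hC3n).le
    · exact (ENNReal.ofReal_mul hC4n).le
  -- sum the four series
  have hshift : ∑' k : ℕ, ENNReal.ofReal ((x k) ^ 2 / w k) = S := by
    rw [hS]
    refine (Function.Injective.tsum_eq (g := fun n : ℕ => n + 1) ?_ ?_).symm
    · exact fun a b h => by simpa using h
    · intro n hn
      rcases n with _ | m
      · simp [hx] at hn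
      · exact ⟨m, rfl⟩
  have hsub : ∑' k : ℕ, ENNReal.ofReal ((x (k + 2)) ^ 2 / w (k + 2)) ≤ S := by
    rw [hS]
    exact ENNReal.tsum_comp_le_tsum_of_injective (f := fun n : ℕ => n + 1)
      (fun a b h => by simpa using h) (fun k => ENNReal.ofReal ((x (k + 1)) ^ 2 / w (k + 1)))
  calc ∑' k : ℕ, ENNReal.ofReal
        ((β * L * ρ ^ (L ^ k) * x k -
            (β * L * ρ ^ (L ^ (k + 1)) + β) * x (k + 1) + β * x (k + 2)) ^ 2 / w (k + 1))
      ≤ ∑' k : ℕ, (ENNReal.ofReal C1 * ENNReal.ofReal ((x k) ^ 2 / w k)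
        + ENNReal.ofReal C2 * ENNReal.ofReal ((x (k + 1)) ^ 2 / w (k + 1))
        + ENNReal.ofReal C3 * ENNReal.ofReal ((x (k + 1)) ^ 2 / w (k + 1))
        + ENNReal.ofReal C4 * ENNReal.ofReal ((x (k + 2)) ^ 2 / w (k + 2))) :=
        ENNReal.tsum_le_tsum hterm
    _ = ENNReal.ofReal C1 * (∑' k : ℕ, ENNReal.ofReal ((x k) ^ 2 / w k))
        + ENNReal.ofReal C2 * S + ENNReal.ofReal C3 * S
        + ENNReal.ofReal C4 * (∑' k : ℕ, ENNReal.ofReal ((x (k + 2)) ^ 2 / w (k + 2))) := by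
        rw [ENNReal.tsum_add, ENNReal.tsum_add, ENNReal.tsum_add,
          ENNReal.tsum_mul_left, ENNReal.tsum_mul_left, ENNReal.tsum_mul_left,
          ENNReal.tsum_mul_left, hS]
    _ ≤ ENNReal.ofReal C1 * S + ENNReal.ofReal C2 * S + ENNReal.ofReal C3 * S
        + ENNReal.ofReal C4 * S := by
        gcongr <;> first | exact hshift.le | exact hsub
    _ = ENNReal.ofReal (β ^ 2 * (2 * L + 2) * (L * ρ ^ (2 * L) + L * d + c⁻¹ + 1)) * S := by
        rw [← add_mul, ← add_mul, ← add_mul, ← ENNReal.ofReal_add hC1n hC2n,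
          ← ENNReal.ofReal_add (by positivity) hC3n,
          ← ENNReal.ofReal_add (by positivity) hC4n]
        congr 2
        rw [hC1, hC2, hC3, hC4]; ring
end
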